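/- arXiv:1210.3291 — 3 statements merged into one kernel-verified Lean document; each statement's English description precedes it below -/
import Mathlib

section
/- Let (Ω, f, τ) satisfy the suspension semiflow assumptions, in particular ‖1/f'‖_{L∞(Ω)} < 1 and (H3): Σ_i ‖1/f'‖_{L∞(ω_i)}·e^{σ‖τ‖_{L∞(ω_i)}} < ∞. Then ∫_Ω e^{στ(x)} dx < ∞ (exponential tails). -/
/-!
On a branch `ω_i` the continuous derivative `f'` cannot vanish: near a zero, `1/f'` would be
unbounded on an open set unless `f'` vanished on a whole neighbourhood, which injectivity forbids.
Hence `|f'| ≥ 1/‖1/f'‖_{L∞(ω_i)}` on `ω_i`, and the change of variables formula gives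
`|ω_i| ≤ ‖1/f'‖_{L∞(ω_i)} |f(ω_i)| ≤ ‖1/f'‖_{L∞(ω_i)} |Ω|`. Since `e^{στ} ≤ e^{σ‖τ‖_{L∞(ω_i)}}`
on `ω_i`, summing over the branches bounds the integral by `|Ω|` times the series of (H3).
-/

open MeasureTheory Set ENNReal

noncomputable section

/-- The `L^∞` norm of a real-valued function over a set (w.r.t. Lebesgue measure). -/
def supNormE (g : ℝ → ℝ) (s : Set ℝ) : ℝ≥0∞ :=
  essSup (fun x => (‖g x‖₊ : ℝ≥0∞)) (volume.restrict s)

/-- Extended exponential `ℝ≥0∞ → ℝ≥0∞`, with `eexp ⊤ = ⊤`. -/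
def eexp (t : ℝ≥0∞) : ℝ≥0∞ :=
  if t = ⊤ then ⊤ else ENNReal.ofReal (Real.exp t.toReal)

open Filter Topology

theorem ContinuousOn.enorm_le_essSup {X E : Type*} [TopologicalSpace X] [MeasurableSpace X]
    [NormedAddCommGroup E] {μ : Measure X} [μ.IsOpenPosMeasure] {g : X → E} {U : Set X}
    (hU : IsOpen U) (hg : ContinuousOn g U) {x : X} (hx : x ∈ U) :
    ‖g x‖ₑ ≤ essSup (fun y => ‖g y‖ₑ) (μ.restrict U) := by
  set M := essSup (fun y => ‖g y‖ₑ) (μ.restrict U)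
  have hae : (fun y => min ‖g y‖ₑ M) =ᵐ[μ.restrict U] fun y => ‖g y‖ₑ :=
    (ae_le_essSup _).mono fun y hy => min_eq_left hy
  have hcont : ContinuousOn (fun y => ‖g y‖ₑ) U := continuous_enorm.comp_continuousOn hg
  calc ‖g x‖ₑ = min ‖g x‖ₑ M :=
        (Measure.eqOn_open_of_ae_eq hae hU (hcont.inf continuousOn_const) hcont hx).symm
    _ ≤ M := min_le_right _ _

theorem enorm_inv_le_supNormE_inv {s : Set ℝ} {f' : ℝ → ℝ} (hs : IsOpen s)
    (hcont : ContinuousOn f' s) {x : ℝ} (hx : x ∈ s) (hx₀ : f' x ≠ 0) :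
    ‖(f' x)⁻¹‖ₑ ≤ supNormE (fun y => (f' y)⁻¹) s := by
  set U := s ∩ f' ⁻¹' {0}ᶜ
  have hU : IsOpen U := hcont.isOpen_inter_preimage hs isOpen_compl_singleton
  calc ‖(f' x)⁻¹‖ₑ ≤ essSup (fun y => ‖(f' y)⁻¹‖ₑ) (volume.restrict U) :=
        ((hcont.mono inter_subset_left).inv₀ fun _ hy => hy.2).enorm_le_essSup hU ⟨hx, hx₀⟩
    _ ≤ supNormE (fun y => (f' y)⁻¹) s :=
        essSup_mono_measure' (Measure.restrict_mono inter_subset_left le_rfl)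

theorem deriv_ne_zero_of_injOn_of_supNormE_inv_ne_top {s : Set ℝ} {f f' : ℝ → ℝ}
    (hs : IsOpen s) (hderiv : ∀ x ∈ s, HasDerivAt f (f' x) x) (hcont : ContinuousOn f' s)
    (hinj : InjOn f s) (hM : supNormE (fun y => (f' y)⁻¹) s ≠ ⊤) {x : ℝ} (hx : x ∈ s) :
    f' x ≠ 0 := by
  intro hx₀
  set K := (supNormE (fun y => (f' y)⁻¹) s).toReal
  have hvanish : ∀ᶠ y in 𝓝 x, y ∈ s ∧ f' y = 0 := by
    have hsmall : ∀ᶠ y in 𝓝 x, K * |f' y| < 1 := by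
      have : ContinuousAt (fun y => K * |f' y|) x :=
        continuousAt_const.mul (hcont.continuousAt (hs.mem_nhds hx)).abs
      exact this.eventually (gt_mem_nhds (by simp [hx₀]))
    filter_upwards [hs.mem_nhds hx, hsmall] with y hys hy
    refine ⟨hys, by_contra fun hy₀ => hy.not_ge ?_⟩
    have := ENNReal.toReal_mono hM (enorm_inv_le_supNormE_inv hs hcont hys hy₀)
    rw [toReal_enorm, norm_inv, Real.norm_eq_abs] at this
    rwa [inv_le_iff_one_le_mul₀ (abs_pos.2 hy₀)] at this
  obtain ⟨ε, hε, hball⟩ := Metric.eventually_nhds_iff_ball.1 hvanish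
  have hend : x + ε / 2 ∈ Metric.ball x ε := by
    rw [Metric.mem_ball, Real.dist_eq, add_sub_cancel_left, abs_of_pos (half_pos hε)]
    exact half_lt_self hε
  have hconst : f x = f (x + ε / 2) :=
    Metric.isOpen_ball.is_const_of_deriv_eq_zero (convex_ball x ε).isPreconnected
      (fun y hy => (hderiv y (hball y hy).1).differentiableAt.differentiableWithinAt)
      (fun y hy => by simp [(hderiv y (hball y hy).1).deriv, (hball y hy).2])
      (Metric.mem_ball_self hε) hend
  have := hinj (hball x (Metric.mem_ball_self hε)).1 (hball _ hend).1 hconst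
  linarith

theorem volume_le_supNormE_inv_mul_volume_image {s : Set ℝ} {f f' : ℝ → ℝ}
    (hs : IsOpen s) (hderiv : ∀ x ∈ s, HasDerivAt f (f' x) x) (hcont : ContinuousOn f' s)
    (hinj : InjOn f s) (hM : supNormE (fun y => (f' y)⁻¹) s ≠ ⊤) :
    volume s ≤ supNormE (fun y => (f' y)⁻¹) s * volume (f '' s) := by
  set M := supNormE (fun y => (f' y)⁻¹) s
  have hpoint : ∀ x ∈ s, 1 ≤ M * ENNReal.ofReal |f' x| := by
    intro x hx
    have hx₀ := deriv_ne_zero_of_injOn_of_supNormE_inv_ne_top hs hderiv hcont hinj hM hx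
    calc 1 = ‖(f' x)⁻¹‖ₑ * ENNReal.ofReal |f' x| := by
          rw [← Real.enorm_eq_ofReal_abs, ← enorm_mul, inv_mul_cancel₀ hx₀, enorm_one]
      _ ≤ M * ENNReal.ofReal |f' x| := by
          gcongr; exact enorm_inv_le_supNormE_inv hs hcont hx hx₀
  calc volume s = ∫⁻ _ in s, 1 := (setLIntegral_one s).symm
    _ ≤ ∫⁻ x in s, M * ENNReal.ofReal |f' x| := setLIntegral_mono' hs.measurableSet hpoint
    _ = M * ∫⁻ x in s, ENNReal.ofReal |f' x| := lintegral_const_mul' _ _ hM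
    _ = M * volume (f '' s) := by
      rw [← setLIntegral_one, lintegral_image_eq_lintegral_abs_deriv_mul hs.measurableSet
        (fun x hx => (hderiv x hx).hasDerivWithinAt) hinj]
      simp only [mul_one]

theorem one_le_eexp (t : ℝ≥0∞) : 1 ≤ eexp t := by
  unfold eexp
  split_ifs
  · exact le_top
  · exact ENNReal.one_le_ofReal.2 (Real.one_le_exp ENNReal.toReal_nonneg)

theorem eexp_mono : Monotone eexp := by
  intro t u htu
  unfold eexp
  split_ifs with ht hu hu
  · exact le_rfl
  · exact absurd (top_le_iff.1 (ht ▸ htu)) hu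
  · exact le_top
  · exact ENNReal.ofReal_le_ofReal (Real.exp_le_exp.2 (ENNReal.toReal_mono hu htu))

theorem eexp_ofReal {r : ℝ} (hr : 0 ≤ r) : eexp (ENNReal.ofReal r) = ENNReal.ofReal (Real.exp r) := by
  rw [eexp, if_neg ENNReal.ofReal_ne_top, ENNReal.toReal_ofReal hr]

theorem ofReal_exp_mul_le_eexp {σ t : ℝ} {T : ℝ≥0∞} (hσ : 0 ≤ σ) (ht : ‖t‖ₑ ≤ T) :
    ENNReal.ofReal (Real.exp (σ * t)) ≤ eexp (ENNReal.ofReal σ * T) :=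
  calc ENNReal.ofReal (Real.exp (σ * t)) ≤ ENNReal.ofReal (Real.exp (σ * |t|)) := by
        gcongr; exact le_abs_self t
    _ = eexp (ENNReal.ofReal σ * ‖t‖ₑ) := by
        rw [Real.enorm_eq_ofReal_abs, ← ENNReal.ofReal_mul hσ,
          eexp_ofReal (mul_nonneg hσ (abs_nonneg t))]
    _ ≤ eexp (ENNReal.ofReal σ * T) := eexp_mono (by gcongr)

theorem setLIntegral_ofReal_exp_mul_le {σ : ℝ} (hσ : 0 ≤ σ) (τ : ℝ → ℝ) (s : Set ℝ) :
    ∫⁻ x in s, ENNReal.ofReal (Real.exp (σ * τ x)) ≤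
      eexp (ENNReal.ofReal σ * supNormE τ s) * volume s :=
  calc ∫⁻ x in s, ENNReal.ofReal (Real.exp (σ * τ x))
      ≤ ∫⁻ _ in s, eexp (ENNReal.ofReal σ * supNormE τ s) :=
        lintegral_mono_ae <| (ae_le_essSup _).mono fun _ hx => ofReal_exp_mul_le_eexp hσ hx
    _ = eexp (ENNReal.ofReal σ * supNormE τ s) * volume s := setLIntegral_const _ _

theorem exponential_tails_general
    (a b : ℝ) (Ω : Set ℝ) (hΩ : Ω = Set.Ioo a b)
    (I : Type) [Countable I] (ω : I → Set ℝ)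
    (hω_sub : ∀ i, ω i ⊆ Ω)
    (hω_int : ∀ i, ∃ c d : ℝ, c < d ∧ ω i = Set.Ioo c d)
    (hω_full : volume (Ω \ ⋃ i, ω i) = 0)
    (f f' : ℝ → ℝ)
    (hf_deriv : ∀ i, ∀ x ∈ ω i, HasDerivAt f (f' x) x)
    (hf_cont : ∀ i, ContinuousOn f' (ω i))
    (hf_inj : ∀ i, Set.InjOn f (ω i))
    (hf_into : ∀ i, f '' ω i ⊆ Ω)
    (τ : ℝ → ℝ)
    (σ : ℝ) (hσ : 0 < σ)
    -- (H3)
    (hH3 : ∑' i : I, supNormE (fun x => (f' x)⁻¹) (ω i) *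
        eexp (ENNReal.ofReal σ * supNormE τ (ω i)) < ⊤) :
    ∫⁻ x in Ω, ENNReal.ofReal (Real.exp (σ * τ x)) < ⊤ := by
  set M := fun i => supNormE (fun x => (f' x)⁻¹) (ω i)
  set E := fun i => eexp (ENNReal.ofReal σ * supNormE τ (ω i))
  have hΩ_fin : volume Ω < ⊤ := hΩ ▸ measure_Ioo_lt_top
  have hΩ_ae : Ω =ᵐ[volume] ⋃ i, ω i :=
    ae_eq_set.2 ⟨hω_full, by rw [sdiff_eq_empty.2 (iUnion_subset hω_sub), measure_empty]⟩
  have hω_open : ∀ i, IsOpen (ω i) := fun i => by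
    obtain ⟨c, d, -, hcd⟩ := hω_int i
    exact hcd ▸ isOpen_Ioo
  have hM : ∀ i, M i ≠ ⊤ := fun i =>
    ne_top_of_le_ne_top hH3.ne ((le_mul_of_one_le_right' (one_le_eexp _)).trans (ENNReal.le_tsum i))
  have hbranch : ∀ i, ∫⁻ x in ω i, ENNReal.ofReal (Real.exp (σ * τ x)) ≤ M i * E i * volume Ω :=
    fun i => calc
      _ ≤ E i * volume (ω i) := setLIntegral_ofReal_exp_mul_le hσ.le τ (ω i)
      _ ≤ E i * (M i * volume (f '' ω i)) := by
          gcongr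
          exact volume_le_supNormE_inv_mul_volume_image (hω_open i) (hf_deriv i) (hf_cont i)
            (hf_inj i) (hM i)
      _ ≤ E i * (M i * volume Ω) := by gcongr; exact hf_into i
      _ = M i * E i * volume Ω := by ring
  calc ∫⁻ x in Ω, ENNReal.ofReal (Real.exp (σ * τ x))
      = ∫⁻ x in ⋃ i, ω i, ENNReal.ofReal (Real.exp (σ * τ x)) := setLIntegral_congr hΩ_ae
    _ ≤ ∑' i, ∫⁻ x in ω i, ENNReal.ofReal (Real.exp (σ * τ x)) := lintegral_iUnion_le _ _
    _ ≤ ∑' i, M i * E i * volume Ω := ENNReal.tsum_le_tsum hbranch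
    _ = (∑' i, M i * E i) * volume Ω := ENNReal.tsum_mul_right
    _ < ⊤ := ENNReal.mul_lt_top hH3 hΩ_fin

/-- **exponential tails.** For a suspension semiflow `(Ω, f, τ)` with
`‖1/f'‖_{L∞(Ω)} < 1` and (H3): `Σ_i ‖1/f'‖_{L∞(ω_i)} e^{σ‖τ‖_{L∞(ω_i)}} < ∞`, one has
`∫_Ω e^{στ(x)} dx < ∞`. -/
theorem exponential_tails
    (a b : ℝ) (hab : a < b) (Ω : Set ℝ) (hΩ : Ω = Set.Ioo a b)
    (I : Type) [Countable I] (ω : I → Set ℝ)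
    (hω_sub : ∀ i, ω i ⊆ Ω)
    (hω_int : ∀ i, ∃ c d : ℝ, c < d ∧ ω i = Set.Ioo c d)
    (hω_disj : Pairwise (Function.onFun Disjoint ω))
    (hω_full : volume (Ω \ ⋃ i, ω i) = 0)
    (f f' : ℝ → ℝ)
    (hf_deriv : ∀ i, ∀ x ∈ ω i, HasDerivAt f (f' x) x)
    (hf_cont : ∀ i, ContinuousOn f' (ω i))
    (hf_inj : ∀ i, Set.InjOn f (ω i))
    (hf_into : ∀ i, f '' ω i ⊆ Ω)
    (hf_exp : supNormE (fun x => (f' x)⁻¹) Ω < 1)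
    (τ : ℝ → ℝ) (hτ_cont : ContinuousOn τ Ω) (hτ_pos : ∀ x ∈ Ω, 0 < τ x)
    (hτ_int : IntegrableOn τ Ω)
    (σ : ℝ) (hσ : 0 < σ)
    -- (H3)
    (hH3 : ∑' i : I, supNormE (fun x => (f' x)⁻¹) (ω i) *
        eexp (ENNReal.ofReal σ * supNormE τ (ω i)) < ⊤) :
    ∫⁻ x in Ω, ENNReal.ofReal (Real.exp (σ * τ x)) < ⊤ :=
  exponential_tails_general a b Ω hΩ I ω hω_sub hω_int hω_full f f' hf_deriv hf_cont hf_inj hf_into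
    τ σ hσ hH3
end
end

section
/- Let (Ω, f, τ) satisfy the suspension semiflow assumptions, let h₀ ∈ L¹(Ω) be nonnegative, and let u, v : Ω_τ → ℂ be bounded measurable, where Ω_τ := {(x,s) : x ∈ ⋃_i ω_i, 0 ≤ s < τ(x)}. For t ≥ 0 define ρ(t) := Σ_{n≥1} ∫_Ω ∫₀^{τ(x)} 1_{[τ_n(x)−s, τ_{n+1}(x)−s)}(t) · u(x,s) · v(f^n(x), s + t − τ_n(x)) · h₀(x) ds dx. Then for every z ∈ ℂ with Re z > 0, ∫₀^∞ e^{−zt} ρ(t) dt = Σ_{n=1}^∞ ∫_Ω h₀(x) · û_{−z}(x) · e^{−zτ_n(x)} · v̂_z(f^n(x)) dx, where for w : Ω_τ → ℂ and ζ ∈ ℂ, ŵ_ζ(x) := ∫₀^{τ(x)} e^{−ζs} w(x,s) ds. -/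
open MeasureTheory Set ENNReal

noncomputable section

/-- The Birkhoff sums `τ_n := Σ_{k<n} τ ∘ f^k` of the return time. -/
def birk (f τ : ℝ → ℝ) (n : ℕ) (x : ℝ) : ℝ := ∑ k ∈ Finset.range n, τ (f^[k] x)

/-- `ρ(t) := Σ_{n≥1} ∫_Ω ∫₀^{τ(x)} 1_{[τ_n(x)-s, τ_{n+1}(x)-s)}(t) · u(x,s) ·
v(fⁿ x, s+t-τ_n(x)) · h₀(x) ds dx`. -/
def rhoFn (Ω : Set ℝ) (f τ : ℝ → ℝ) (h₀ : ℝ → ℝ) (u v : ℝ × ℝ → ℂ) (t : ℝ) : ℂ :=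
  ∑' n : ℕ, ∫ x in Ω,
    (∫ s in Ioo 0 (τ x),
      if birk f τ (n + 1) x - s ≤ t ∧ t < birk f τ (n + 2) x - s
      then u (x, s) * v (f^[n + 1] x, s + t - birk f τ (n + 1) x) else 0) * (h₀ x : ℂ)

/-- `ŵ_ζ(x) := ∫₀^{τ(x)} e^{-ζ s} w(x,s) ds`. -/
def hatObs (τ : ℝ → ℝ) (w : ℝ × ℝ → ℂ) (ζ : ℂ) (x : ℝ) : ℂ :=
  ∫ s in Ioo 0 (τ x), Complex.exp (-ζ * s) * w (x, s)

/-!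
Write `ρ(t) = ∑ₙ ∫_Ω (∫ Kₙ(x, s, t) ds) h₀(x) dx`. For fixed `(x, s)` the kernel `Kₙ` lives on the
time window `[τₙ₊₁(x) - s, τₙ₊₂(x) - s)`, so shifting `t` by `τₙ₊₁(x) - s` turns its Laplace
transform into `u(x, s) e^{-z(τₙ₊₁(x) - s)} v̂_z(fⁿ⁺¹ x)`, and integrating in `s` gives
`û_{-z}(x) e^{-z τₙ₊₁(x)} v̂_z(fⁿ⁺¹ x)`. Exchanging the sum over `n` with the three integrals is
justified by Tonelli: the windows are disjoint and contained in `[τ(x) - s, ∞)`, so the absolute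
integrals are bounded by `Mu Mv ‖h₀‖₁ / (Re z)²`.

The maps `f` and `τ` are only meaningful on `⋃ i, ω i` and `Ω` and need not be measurable. Since
`f` is injective with nonvanishing derivative on each `ω i`, preimages of null sets are null,
so almost every orbit stays in `⋃ i, ω i` forever; along such orbits `f` and `τ` can be replaced
by measurable modifications.
-/

theorem iterate_eq_of_eqOn {α : Type*} {f g : α → α} {U : Set α} (h : EqOn f g U) {x : α}
    (hx : ∀ k, f^[k] x ∈ U) : ∀ k, f^[k] x = g^[k] x
  | 0 => rfl
  | k + 1 => by
    rw [Function.iterate_succ_apply', Function.iterate_succ_apply', h (hx k),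
      iterate_eq_of_eqOn h hx k]

theorem ae_forall_iterate_mem {α : Type*} [MeasurableSpace α] {μ : Measure α} {f : α → α}
    {U Ω : Set α} (hΩU : μ (Ω \ U) = 0) (hf : MapsTo f U Ω)
    (hnull : ∀ N, μ N = 0 → μ (U ∩ f ⁻¹' N) = 0) :
    ∀ᵐ x ∂μ, x ∈ Ω → ∀ k, f^[k] x ∈ U := by
  have hbad : ∀ k, μ {x | x ∈ Ω ∧ f^[k] x ∉ U} = 0 := by
    intro k
    induction k with
    | zero => exact hΩU
    | succ k ih =>
      refine measure_mono_null (fun x ⟨hxΩ, hx⟩ => ?_) (measure_union_null hΩU (hnull _ ih))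
      by_cases hxU : x ∈ U
      · exact Or.inr ⟨hxU, hf hxU, by rwa [← Function.iterate_succ_apply]⟩
      · exact Or.inl ⟨hxΩ, hxU⟩
  rw [ae_iff]
  refine measure_mono_null (fun x hx => ?_) (measure_iUnion_null hbad)
  obtain ⟨hxΩ, hx⟩ := Classical.not_imp.1 hx
  obtain ⟨k, hk⟩ := not_forall.1 hx
  exact mem_iUnion.2 ⟨k, hxΩ, hk⟩

theorem ne_zero_of_ae_abs_inv_le {f f' : ℝ → ℝ} {s : Set ℝ} {C : ℝ} (hs : IsOpen s)
    (hf : ∀ x ∈ s, HasDerivAt f (f' x) x) (hf' : ContinuousOn f' s) (hinj : InjOn f s)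
    (hC : ∀ᵐ x ∂volume.restrict s, |(f' x)⁻¹| ≤ C) {x : ℝ} (hx : x ∈ s) : f' x ≠ 0 := by
  intro hx0
  have hsmall : IsOpen {y : ℝ | C * |y| < 1} := isOpen_lt (by fun_prop) continuous_const
  -- Where `C * |f'| < 1`, the bound on `1 / f'` only allows `f' = 0`, first a.e. and then, by
  -- continuity, everywhere; so `f` is constant near a zero of `f'`.
  have hW0 : ∀ y ∈ s ∩ f' ⁻¹' {y | C * |y| < 1}, f' y = 0 := by
    intro y hy
    by_contra hy0
    have hopen : IsOpen (s ∩ f' ⁻¹' ({y | C * |y| < 1} ∩ {0}ᶜ)) :=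
      hf'.isOpen_inter_preimage hs (hsmall.inter isOpen_compl_singleton)
    have hbad : s ∩ f' ⁻¹' ({y | C * |y| < 1} ∩ {0}ᶜ) ⊆ {y | ¬|(f' y)⁻¹| ≤ C} := by
      rintro w ⟨-, hw, hw0⟩ hle
      have hpos : 0 < |f' w| := abs_pos.2 hw0
      have : 1 ≤ C * |f' w| :=
        calc 1 = |(f' w)⁻¹| * |f' w| := by rw [abs_inv, inv_mul_cancel₀ hpos.ne']
          _ ≤ C * |f' w| := by gcongr
      exact (not_lt.2 this) hw
    have hnull := measure_mono_null hbad (ae_iff.1 hC)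
    rw [Measure.restrict_eq_self _ inter_subset_left] at hnull
    exact (hopen.measure_pos volume ⟨y, hy.1, hy.2, hy0⟩).ne' hnull
  obtain ⟨ε, hε, hball⟩ := Metric.isOpen_iff.1
    (hf'.isOpen_inter_preimage hs hsmall) x ⟨hx, by simp [hx0]⟩
  have hmem : x + ε / 2 ∈ Metric.ball x ε := by
    rw [Metric.mem_ball, Real.dist_eq, add_sub_cancel_left, abs_of_pos (half_pos hε)]
    exact half_lt_self hε
  have hconst : f (x + ε / 2) = f x :=
    Metric.isOpen_ball.is_const_of_deriv_eq_zero (convex_ball x ε).isPreconnected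
      (fun y hy => (hf y (hball hy).1).differentiableAt.differentiableWithinAt)
      (fun y hy => (hf y (hball hy).1).deriv.trans (hW0 y (hball hy)))
      hmem (Metric.mem_ball_self hε)
  have := hinj (hball hmem).1 hx hconst
  linarith

theorem volume_inter_preimage_eq_zero {f f' : ℝ → ℝ} {s N : Set ℝ} (hs : IsOpen s)
    (hf : ∀ x ∈ s, HasDerivAt f (f' x) x) (hf' : ∀ x ∈ s, f' x ≠ 0) (hinj : InjOn f s)
    (hN : volume N = 0) : volume (s ∩ f ⁻¹' N) = 0 := by
  set N' := toMeasurable volume N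
  have himage := lintegral_image_eq_lintegral_abs_deriv_mul hs.measurableSet
    (fun x hx => (hf x hx).hasDerivWithinAt) hinj (N'.indicator 1)
  have hzero : ∫⁻ x in s, ENNReal.ofReal |f' x| * N'.indicator 1 (f x) = 0 := by
    rw [← himage]
    refine le_antisymm ((lintegral_mono_set (subset_univ _)).trans ?_) zero_le
    rw [Measure.restrict_univ, lintegral_indicator_one (measurableSet_toMeasurable _ _),
      measure_toMeasurable, hN]
  have hmeas : AEMeasurable (fun x => ENNReal.ofReal |f' x| * N'.indicator 1 (f x))
      (volume.restrict s) := by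
    have hf'_ae : f' =ᵐ[volume.restrict s] deriv f :=
      ae_restrict_of_forall_mem hs.measurableSet fun x hx => (hf x hx).deriv.symm
    have hfc : ContinuousOn f s := fun x hx => (hf x hx).continuousAt.continuousWithinAt
    exact (((measurable_deriv f).aemeasurable.congr hf'_ae.symm).abs.ennreal_ofReal).mul
      ((measurable_one.indicator (measurableSet_toMeasurable _ _)).comp_aemeasurable
        (hfc.aemeasurable hs.measurableSet))
  have hae : ∀ᵐ x ∂volume.restrict s, f x ∉ N' := by
    filter_upwards [(lintegral_eq_zero_iff' hmeas).1 hzero,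
      ae_restrict_mem hs.measurableSet] with x hx hxs
    intro hxN
    simp [indicator_of_mem hxN, hf' x hxs] at hx
  have hnull := ae_iff.1 hae
  rw [Measure.restrict_apply' hs.measurableSet] at hnull
  refine measure_mono_null (fun x hx => ?_) hnull
  exact ⟨not_not.2 (subset_toMeasurable _ _ hx.2), hx.1⟩

theorem ae_abs_le_one_of_supNormE_lt_one {g : ℝ → ℝ} {s : Set ℝ} (h : supNormE g s < 1) :
    ∀ᵐ x ∂volume.restrict s, |g x| ≤ 1 :=
  (ae_lt_of_essSup_lt h).mono fun x hx => by
    rw [← Real.norm_eq_abs, ← coe_nnnorm]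
    exact_mod_cast (ENNReal.coe_lt_one_iff.1 hx).le

theorem ae_forall_iterate_mem_iUnion {I : Type*} [Countable I] {ω : I → Set ℝ} {Ω : Set ℝ}
    {f f' : ℝ → ℝ} {C : ℝ} (hω_open : ∀ i, IsOpen (ω i)) (hω_sub : ∀ i, ω i ⊆ Ω)
    (hω_full : volume (Ω \ ⋃ i, ω i) = 0) (hf_deriv : ∀ i, ∀ x ∈ ω i, HasDerivAt f (f' x) x)
    (hf_cont : ∀ i, ContinuousOn f' (ω i)) (hf_inj : ∀ i, InjOn f (ω i))
    (hf_into : ∀ i, f '' ω i ⊆ Ω) (hf_exp : ∀ᵐ x ∂volume.restrict Ω, |(f' x)⁻¹| ≤ C) :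
    ∀ᵐ x, x ∈ Ω → ∀ k, f^[k] x ∈ ⋃ i, ω i := by
  have hf'_ne : ∀ i, ∀ x ∈ ω i, f' x ≠ 0 := fun i _ hx =>
    ne_zero_of_ae_abs_inv_le (hω_open i) (hf_deriv i) (hf_cont i) (hf_inj i)
      (ae_restrict_of_ae_restrict_of_subset (hω_sub i) hf_exp) hx
  refine ae_forall_iterate_mem hω_full ?_ fun N hN => ?_
  · intro x hx
    obtain ⟨i, hi⟩ := mem_iUnion.1 hx
    exact hf_into i (mem_image_of_mem f hi)
  · rw [iUnion_inter]
    exact measure_iUnion_null fun i =>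
      volume_inter_preimage_eq_zero (hω_open i) (hf_deriv i) (hf'_ne i) (hf_inj i) hN

theorem tsum_setLIntegral_Ico_le {μ : Measure ℝ} {p : ℕ → ℝ} (hp : Monotone p) (g : ℝ → ℝ≥0∞) :
    ∑' n, ∫⁻ t in Ico (p n) (p (n + 1)), g t ∂μ ≤ ∫⁻ t in Ici (p 0), g t ∂μ := by
  have hdisj : Pairwise (Function.onFun Disjoint fun n => Ico (p n) (p (n + 1))) := by
    simpa only [Order.succ_eq_add_one] using hp.pairwise_disjoint_on_Ico_succ
  rw [← lintegral_iUnion (fun n => measurableSet_Ico) hdisj]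
  exact lintegral_mono_set (iUnion_subset fun n => Ico_subset_Ici_self.trans
    (Ici_subset_Ici.2 (hp n.zero_le)))

theorem lintegral_Ici_exp_neg_mul {c : ℝ} (hc : 0 < c) (a : ℝ) :
    ∫⁻ t in Ici a, ENNReal.ofReal (Real.exp (-c * t)) = ENNReal.ofReal (Real.exp (-c * a) / c) := by
  rw [Measure.restrict_congr_set Ioi_ae_eq_Ici.symm, ← ofReal_integral_eq_lintegral_ofReal
    (integrableOn_exp_mul_Ioi (neg_lt_zero.2 hc) a) (ae_of_all _ fun t => (Real.exp_pos _).le),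
    integral_exp_mul_Ioi (neg_lt_zero.2 hc), neg_div_neg_eq]

theorem lintegral_Ioo_exp_neg_mul_sub_div_le {c : ℝ} (hc : 0 < c) (T : ℝ) :
    ∫⁻ s in Ioo 0 T, ENNReal.ofReal (Real.exp (-c * (T - s)) / c) ≤ ENNReal.ofReal (1 / c ^ 2) := by
  have hexp : ∀ s, Real.exp (-c * (T - s)) / c = Real.exp (c * s) * (Real.exp (-c * T) / c) :=
    fun s => by rw [mul_div_assoc', ← Real.exp_add]; ring_nf
  calc ∫⁻ s in Ioo 0 T, ENNReal.ofReal (Real.exp (-c * (T - s)) / c)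
      ≤ ∫⁻ s in Iic T, ENNReal.ofReal (Real.exp (c * s) * (Real.exp (-c * T) / c)) := by
        simp only [hexp]
        exact lintegral_mono_set (Ioo_subset_Iio_self.trans Iio_subset_Iic_self)
    _ = ENNReal.ofReal (1 / c ^ 2) := by
      rw [← ofReal_integral_eq_lintegral_ofReal ((integrableOn_exp_mul_Iic hc T).mul_const _)
        (ae_of_all _ fun t => by positivity), integral_mul_const, integral_exp_mul_Iic hc,
        div_mul_div_comm, ← Real.exp_add]
      simp [sq]

theorem integral_Ioi_ite_exp_mul_comp_sub (z : ℂ) {p : ℝ} (hp : 0 < p) (L : ℝ) (w : ℝ → ℂ) :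
    ∫ t in Ioi (0 : ℝ), (if p ≤ t ∧ t < p + L then Complex.exp (-z * t) * w (t - p) else 0)
      = Complex.exp (-z * p) * ∫ r in Ioo 0 L, Complex.exp (-z * r) * w r := by
  have hshift := (measurePreserving_sub_right volume p).setIntegral_preimage_emb
    (measurableEmbedding_subRight p) (fun r => Complex.exp (-z * p) * (Complex.exp (-z * r) * w r))
    (Ioo 0 L)
  rw [preimage_sub_const_Ioo, zero_add, add_comm L] at hshift
  have hind : (fun t : ℝ => if p ≤ t ∧ t < p + L then Complex.exp (-z * t) * w (t - p) else 0)
      = (Ico p (p + L)).indicator fun t => Complex.exp (-z * t) * w (t - p) := by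
    ext t; simp only [indicator_apply, mem_Ico]
  rw [hind, setIntegral_indicator measurableSet_Ico,
    inter_eq_right.2 (show Ico p (p + L) ⊆ Ioi 0 from fun t ht => hp.trans_le ht.1),
    integral_Ico_eq_integral_Ioo,
    ← integral_const_mul, ← hshift]
  refine setIntegral_congr_fun measurableSet_Ioo fun t _ => ?_
  rw [← mul_assoc, ← Complex.exp_add]
  push_cast
  ring_nf

theorem birk_succ (f τ : ℝ → ℝ) (n : ℕ) (x : ℝ) :
    birk f τ (n + 1) x = birk f τ n x + τ (f^[n] x) :=
  Finset.sum_range_succ _ n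

theorem birk_one (f τ : ℝ → ℝ) (x : ℝ) : birk f τ 1 x = τ x := by
  simp [birk]

theorem birk_congr {f g τ σ : ℝ → ℝ} {U : Set ℝ} (hf : EqOn f g U) (hτ : EqOn τ σ U) {x : ℝ}
    (hx : ∀ k, f^[k] x ∈ U) (n : ℕ) : birk f τ n x = birk g σ n x :=
  Finset.sum_congr rfl fun k _ => by rw [hτ (hx k), iterate_eq_of_eqOn hf hx k]

theorem monotone_birk {f τ : ℝ → ℝ} (hτ : ∀ y, 0 ≤ τ y) (x : ℝ) :
    Monotone fun n => birk f τ n x :=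
  monotone_nat_of_le_succ fun n => by simp only [birk_succ]; linarith [hτ (f^[n] x)]

@[fun_prop]
theorem measurable_birk {f τ : ℝ → ℝ} (hf : Measurable f) (hτ : Measurable τ) (n : ℕ) :
    Measurable (birk f τ n) :=
  Finset.measurable_sum _ fun k _ => hτ.comp (hf.iterate k)

theorem hatObs_congr {τ σ : ℝ → ℝ} {y : ℝ} (h : τ y = σ y) (w : ℝ × ℝ → ℂ) (ζ : ℂ) :
    hatObs τ w ζ y = hatObs σ w ζ y := by
  rw [hatObs, hatObs, h]

def rhoKernel (f τ : ℝ → ℝ) (u v : ℝ × ℝ → ℂ) (n : ℕ) (x s t : ℝ) : ℂ :=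
  (Ioo 0 (τ x)).indicator (fun s =>
    if birk f τ (n + 1) x - s ≤ t ∧ t < birk f τ (n + 2) x - s
    then u (x, s) * v (f^[n + 1] x, s + t - birk f τ (n + 1) x) else 0) s

theorem rhoFn_eq_tsum_rhoKernel (Ω : Set ℝ) (f τ h₀ : ℝ → ℝ) (u v : ℝ × ℝ → ℂ) (t : ℝ) :
    rhoFn Ω f τ h₀ u v t = ∑' n, ∫ x in Ω, (∫ s, rhoKernel f τ u v n x s t) * (h₀ x : ℂ) := by
  simp only [rhoFn, rhoKernel, integral_indicator measurableSet_Ioo]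

section Kernel

variable {f τ : ℝ → ℝ} {u v : ℝ × ℝ → ℂ} {Mu Mv : ℝ} {z : ℂ}

theorem rhoKernel_of_notMem {n : ℕ} {x s : ℝ}
    (hs : s ∉ Ioo 0 (τ x)) (t : ℝ) : rhoKernel f τ u v n x s t = 0 := by
  rw [rhoKernel, indicator_of_notMem hs]

@[fun_prop]
theorem Measurable.rhoKernel {α : Type*} [MeasurableSpace α] (hf : Measurable f)
    (hτ : Measurable τ) (hu : Measurable u) (hv : Measurable v) (n : ℕ) {X S T : α → ℝ}
    (hX : Measurable X) (hS : Measurable S) (hT : Measurable T) :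
    Measurable fun a => _root_.rhoKernel f τ u v n (X a) (S a) (T a) := by
  simp only [_root_.rhoKernel, indicator_apply, mem_Ioo]
  refine Measurable.ite ?_ (Measurable.ite ?_ (by fun_prop) measurable_const) measurable_const
  · exact (measurableSet_lt measurable_const hS).inter (measurableSet_lt hS (by fun_prop))
  · exact (measurableSet_le (by fun_prop) hT).inter (measurableSet_lt hT (by fun_prop))

@[fun_prop]
theorem Measurable.integral_rhoKernel {α : Type*} [MeasurableSpace α] (hf : Measurable f)
    (hτ : Measurable τ) (hu : Measurable u) (hv : Measurable v) (n : ℕ) {X T : α → ℝ}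
    (hX : Measurable X) (hT : Measurable T) :
    Measurable fun a => ∫ s, _root_.rhoKernel f τ u v n (X a) s (T a) :=
  (StronglyMeasurable.integral_prod_right'
    (f := fun p : α × ℝ => _root_.rhoKernel f τ u v n (X p.1) p.2 (T p.1))
    (by fun_prop : Measurable _).stronglyMeasurable).measurable

theorem integral_Ioi_exp_mul_rhoKernel (hτ : ∀ y, 0 < τ y)
    (z : ℂ) (n : ℕ) {x s : ℝ} (hs : s ∈ Ioo 0 (τ x)) :
    ∫ t in Ioi (0 : ℝ), Complex.exp (-z * t) * rhoKernel f τ u v n x s t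
      = u (x, s) * Complex.exp (-z * (birk f τ (n + 1) x - s)) * hatObs τ v z (f^[n + 1] x) := by
  have hp : 0 < birk f τ (n + 1) x - s := by
    have : birk f τ 1 x ≤ birk f τ (n + 1) x :=
      monotone_birk (fun y => (hτ y).le) x (Nat.le_add_left 1 n)
    rw [birk_one] at this
    linarith [hs.2]
  have hq : birk f τ (n + 2) x - s = birk f τ (n + 1) x - s + τ (f^[n + 1] x) := by
    rw [birk_succ f τ (n + 1)]; ring
  have := integral_Ioi_ite_exp_mul_comp_sub z hp (τ (f^[n + 1] x))
    (fun r => u (x, s) * v (f^[n + 1] x, r))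
  have harg : ∀ t, s + t - birk f τ (n + 1) x = t - (birk f τ (n + 1) x - s) := fun t => by ring
  simp only [rhoKernel, indicator_of_mem hs, mul_ite, mul_zero, hq, harg]
  rw [this]
  simp only [hatObs, mul_left_comm _ (u (x, s)), integral_const_mul]
  push_cast
  ring

theorem integral_integral_Ioi_exp_mul_rhoKernel (hτ : ∀ y, 0 < τ y) (z : ℂ) (n : ℕ) (x : ℝ) :
    ∫ s, ∫ t in Ioi (0 : ℝ), Complex.exp (-z * t) * rhoKernel f τ u v n x s t
      = hatObs τ u (-z) x * Complex.exp (-z * birk f τ (n + 1) x) * hatObs τ v z (f^[n + 1] x) := by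
  have hzero : ∀ s ∉ Ioo 0 (τ x),
      ∫ t in Ioi (0 : ℝ), Complex.exp (-z * t) * rhoKernel f τ u v n x s t = 0 := fun s hs => by
    simp only [rhoKernel_of_notMem hs, mul_zero, integral_zero]
  rw [← setIntegral_eq_integral_of_forall_compl_eq_zero hzero,
    setIntegral_congr_fun measurableSet_Ioo fun s hs => integral_Ioi_exp_mul_rhoKernel hτ z n hs]
  have hsplit : ∀ s : ℝ, u (x, s) * Complex.exp (-z * (birk f τ (n + 1) x - s))
      * hatObs τ v z (f^[n + 1] x) = Complex.exp (-z * birk f τ (n + 1) x)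
        * hatObs τ v z (f^[n + 1] x) * (Complex.exp (-(-z) * s) * u (x, s)) := fun s => by
    rw [show -z * (birk f τ (n + 1) x - s) = -z * birk f τ (n + 1) x + -(-z) * s by ring,
      Complex.exp_add]
    ring
  rw [setIntegral_congr_fun measurableSet_Ioo fun s _ => hsplit s, integral_const_mul]
  simp only [hatObs]
  ring

theorem enorm_exp_mul_rhoKernel_le (hu : ∀ p, ‖u p‖ ≤ Mu) (hv : ∀ p, ‖v p‖ ≤ Mv) (n : ℕ)
    {x s : ℝ} (hs : s ∈ Ioo 0 (τ x)) (t : ℝ) :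
    ‖Complex.exp (-z * t) * rhoKernel f τ u v n x s t‖ₑ
      ≤ (Ico (birk f τ (n + 1) x - s) (birk f τ (n + 2) x - s)).indicator
          (fun t => ENNReal.ofReal (Mu * Mv) * ENNReal.ofReal (Real.exp (-z.re * t))) t := by
  rw [rhoKernel, indicator_of_mem hs]
  by_cases ht : birk f τ (n + 1) x - s ≤ t ∧ t < birk f τ (n + 2) x - s
  · have hMu : 0 ≤ Mu := (norm_nonneg _).trans (hu 0)
    have hMv : 0 ≤ Mv := (norm_nonneg _).trans (hv 0)
    rw [if_pos ht, indicator_of_mem (show t ∈ Ico _ _ from ht), ← ofReal_mul (by positivity),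
      ← ofReal_norm,
      norm_mul, Complex.norm_exp, mul_comm (Mu * Mv)]
    gcongr
    · simp
    · exact norm_mul_le_of_le (hu _) (hv _)
  · rw [if_neg ht, mul_zero, enorm_zero]
    exact zero_le

theorem tsum_lintegral_exp_mul_rhoKernel_le (hτ : ∀ y, 0 < τ y) (hu : ∀ p, ‖u p‖ ≤ Mu)
    (hv : ∀ p, ‖v p‖ ≤ Mv) (hz : 0 < z.re) (x s : ℝ) :
    ∑' n, ∫⁻ t : ℝ, ‖Complex.exp (-z * t) * rhoKernel f τ u v n x s t‖ₑ
      ≤ (Ioo 0 (τ x)).indicator (fun s =>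
          ENNReal.ofReal (Mu * Mv) * ENNReal.ofReal (Real.exp (-z.re * (τ x - s)) / z.re)) s := by
  by_cases hs : s ∈ Ioo 0 (τ x)
  · rw [indicator_of_mem hs]
    have hmono : Monotone fun n => birk f τ (n + 1) x - s := fun m n hmn =>
      sub_le_sub_right (monotone_birk (fun y => (hτ y).le) x (Nat.add_le_add_right hmn 1)) s
    calc ∑' n, ∫⁻ t : ℝ, ‖Complex.exp (-z * t) * rhoKernel f τ u v n x s t‖ₑ
        ≤ ∑' n, ENNReal.ofReal (Mu * Mv) * ∫⁻ t in Ico (birk f τ (n + 1) x - s)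
            (birk f τ (n + 1 + 1) x - s), ENNReal.ofReal (Real.exp (-z.re * t)) := by
          refine ENNReal.tsum_le_tsum fun n => ?_
          rw [← lintegral_const_mul' _ _ ofReal_ne_top, ← lintegral_indicator measurableSet_Ico]
          exact lintegral_mono (enorm_exp_mul_rhoKernel_le hu hv n hs)
      _ ≤ ENNReal.ofReal (Mu * Mv) * ∫⁻ t in Ici (birk f τ (0 + 1) x - s),
            ENNReal.ofReal (Real.exp (-z.re * t)) := by
          rw [ENNReal.tsum_mul_left]
          gcongr
          exact tsum_setLIntegral_Ico_le hmono _
      _ = _ := by rw [lintegral_Ici_exp_neg_mul hz, zero_add, birk_one]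
  · simp [indicator_of_notMem hs, rhoKernel_of_notMem hs]

theorem tsum_lintegral_lintegral_exp_mul_rhoKernel_le (hfm : Measurable f) (hτm : Measurable τ)
    (hτ : ∀ y, 0 < τ y) (hum : Measurable u) (hvm : Measurable v) (hu : ∀ p, ‖u p‖ ≤ Mu)
    (hv : ∀ p, ‖v p‖ ≤ Mv) (hz : 0 < z.re) (x : ℝ) :
    ∑' n, ∫⁻ s, ∫⁻ t : ℝ, ‖Complex.exp (-z * t) * rhoKernel f τ u v n x s t‖ₑ
      ≤ ENNReal.ofReal (Mu * Mv) * ENNReal.ofReal (1 / z.re ^ 2) := by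
  rw [← lintegral_tsum fun n => by fun_prop]
  calc ∫⁻ s, ∑' n, ∫⁻ t : ℝ, ‖Complex.exp (-z * t) * rhoKernel f τ u v n x s t‖ₑ
      ≤ ∫⁻ s in Ioo 0 (τ x),
          ENNReal.ofReal (Mu * Mv) * ENNReal.ofReal (Real.exp (-z.re * (τ x - s)) / z.re) := by
        rw [← lintegral_indicator measurableSet_Ioo]
        exact lintegral_mono (tsum_lintegral_exp_mul_rhoKernel_le hτ hu hv hz x)
    _ ≤ _ := by
      rw [lintegral_const_mul' _ _ ofReal_ne_top]
      gcongr
      exact lintegral_Ioo_exp_neg_mul_sub_div_le hz _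

theorem integrable_exp_mul_rhoKernel (hfm : Measurable f) (hτm : Measurable τ)
    (hτ : ∀ y, 0 < τ y) (hum : Measurable u) (hvm : Measurable v) (hu : ∀ p, ‖u p‖ ≤ Mu)
    (hv : ∀ p, ‖v p‖ ≤ Mv) (hz : 0 < z.re) (n : ℕ) (x : ℝ) :
    Integrable (Function.uncurry fun t s : ℝ => Complex.exp (-z * t) * rhoKernel f τ u v n x s t)
      ((volume.restrict (Ioi (0 : ℝ))).prod volume) := by
  have hmeas : Measurable (Function.uncurry fun t s : ℝ =>
      Complex.exp (-z * t) * rhoKernel f τ u v n x s t) := by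
    fun_prop
  refine ⟨hmeas.aestronglyMeasurable, ?_⟩
  rw [HasFiniteIntegral, lintegral_prod _ hmeas.enorm.aemeasurable]
  calc ∫⁻ t in Ioi (0 : ℝ), ∫⁻ s, ‖Complex.exp (-z * t) * rhoKernel f τ u v n x s t‖ₑ
      ≤ ∫⁻ t : ℝ, ∫⁻ s, ‖Complex.exp (-z * t) * rhoKernel f τ u v n x s t‖ₑ :=
        lintegral_mono' Measure.restrict_le_self le_rfl
    _ = ∫⁻ s, ∫⁻ t : ℝ, ‖Complex.exp (-z * t) * rhoKernel f τ u v n x s t‖ₑ :=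
        lintegral_lintegral_swap (by fun_prop)
    _ ≤ ∑' n, ∫⁻ s, ∫⁻ t : ℝ, ‖Complex.exp (-z * t) * rhoKernel f τ u v n x s t‖ₑ :=
        ENNReal.le_tsum n
    _ < ∞ := (tsum_lintegral_lintegral_exp_mul_rhoKernel_le hfm hτm hτ hum hvm hu hv hz x).trans_lt
        (mul_lt_top ofReal_lt_top ofReal_lt_top)

theorem lintegral_enorm_exp_mul_integral_rhoKernel_le (hfm : Measurable f) (hτm : Measurable τ)
    (hum : Measurable u) (hvm : Measurable v) {h₀ : ℝ → ℝ} (hh₀ : Measurable h₀) (Ω : Set ℝ)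
    (n : ℕ) :
    ∫⁻ t in Ioi (0 : ℝ), ∫⁻ x in Ω,
        ‖Complex.exp (-z * t) * ((∫ s, rhoKernel f τ u v n x s t) * (h₀ x : ℂ))‖ₑ
      ≤ ∫⁻ x in Ω, ‖h₀ x‖ₑ *
          ∫⁻ s, ∫⁻ t : ℝ, ‖Complex.exp (-z * t) * rhoKernel f τ u v n x s t‖ₑ := by
  rw [lintegral_lintegral_swap (by fun_prop)]
  refine lintegral_mono fun x => ?_
  have hpt : ∀ t : ℝ, ‖Complex.exp (-z * t) * ((∫ s, rhoKernel f τ u v n x s t) * (h₀ x : ℂ))‖ₑ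
      ≤ ‖h₀ x‖ₑ * ∫⁻ s, ‖Complex.exp (-z * t) * rhoKernel f τ u v n x s t‖ₑ := fun t => by
    rw [show Complex.exp (-z * t) * ((∫ s, rhoKernel f τ u v n x s t) * (h₀ x : ℂ))
        = h₀ x * ∫ s, Complex.exp (-z * t) * rhoKernel f τ u v n x s t by
      rw [integral_const_mul]; ring, enorm_mul, ← ofReal_norm (h₀ x : ℂ), Complex.norm_real,
      ofReal_norm]
    gcongr
    exact enorm_integral_le_lintegral_enorm _
  calc ∫⁻ t in Ioi (0 : ℝ),
        ‖Complex.exp (-z * t) * ((∫ s, rhoKernel f τ u v n x s t) * (h₀ x : ℂ))‖ₑ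
      ≤ ∫⁻ t : ℝ, ‖h₀ x‖ₑ * ∫⁻ s, ‖Complex.exp (-z * t) * rhoKernel f τ u v n x s t‖ₑ :=
        lintegral_mono' Measure.restrict_le_self hpt
    _ = ‖h₀ x‖ₑ * ∫⁻ s, ∫⁻ t : ℝ, ‖Complex.exp (-z * t) * rhoKernel f τ u v n x s t‖ₑ := by
      rw [lintegral_const_mul' _ _ enorm_ne_top, lintegral_lintegral_swap (by fun_prop)]

theorem tsum_lintegral_enorm_mul_lintegral_exp_mul_rhoKernel_lt_top (hfm : Measurable f)
    (hτm : Measurable τ) (hτ : ∀ y, 0 < τ y) (hum : Measurable u) (hvm : Measurable v)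
    (hu : ∀ p, ‖u p‖ ≤ Mu) (hv : ∀ p, ‖v p‖ ≤ Mv) (hz : 0 < z.re) {h₀ : ℝ → ℝ}
    (hh₀ : Measurable h₀) {Ω : Set ℝ} (hh₀Ω : IntegrableOn h₀ Ω) :
    ∑' n, ∫⁻ x in Ω,
        ‖h₀ x‖ₑ * ∫⁻ s, ∫⁻ t : ℝ, ‖Complex.exp (-z * t) * rhoKernel f τ u v n x s t‖ₑ < ∞ := by
  rw [← lintegral_tsum fun n => by fun_prop]
  simp_rw [ENNReal.tsum_mul_left]
  calc ∫⁻ x in Ω, ‖h₀ x‖ₑ *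
        ∑' n, ∫⁻ s, ∫⁻ t : ℝ, ‖Complex.exp (-z * t) * rhoKernel f τ u v n x s t‖ₑ
      ≤ ∫⁻ x in Ω, ‖h₀ x‖ₑ * (ENNReal.ofReal (Mu * Mv) * ENNReal.ofReal (1 / z.re ^ 2)) := by
        gcongr with x
        exact tsum_lintegral_lintegral_exp_mul_rhoKernel_le hfm hτm hτ hum hvm hu hv hz x
    _ < ∞ := by
      rw [lintegral_mul_const' _ _ (mul_ne_top ofReal_ne_top ofReal_ne_top)]
      exact mul_lt_top hh₀Ω.2 (mul_lt_top ofReal_lt_top ofReal_lt_top)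

theorem integral_Ioi_exp_mul_integral_rhoKernel (hfm : Measurable f) (hτm : Measurable τ)
    (hτ : ∀ y, 0 < τ y) (hum : Measurable u) (hvm : Measurable v) (hu : ∀ p, ‖u p‖ ≤ Mu)
    (hv : ∀ p, ‖v p‖ ≤ Mv) (hz : 0 < z.re) {h₀ : ℝ → ℝ} (hh₀ : Measurable h₀) {Ω : Set ℝ}
    {n : ℕ} (hfin : ∫⁻ x in Ω,
        ‖h₀ x‖ₑ * ∫⁻ s, ∫⁻ t : ℝ, ‖Complex.exp (-z * t) * rhoKernel f τ u v n x s t‖ₑ ≠ ∞) :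
    ∫ t in Ioi (0 : ℝ),
        Complex.exp (-z * t) * ∫ x in Ω, (∫ s, rhoKernel f τ u v n x s t) * (h₀ x : ℂ)
      = ∫ x in Ω, (h₀ x : ℂ) * hatObs τ u (-z) x * Complex.exp (-z * birk f τ (n + 1) x)
          * hatObs τ v z (f^[n + 1] x) := by
  have hmeas : Measurable (Function.uncurry fun t x : ℝ =>
      Complex.exp (-z * t) * ((∫ s, rhoKernel f τ u v n x s t) * (h₀ x : ℂ))) := by
    fun_prop
  have hint : Integrable (Function.uncurry fun t x : ℝ =>
      Complex.exp (-z * t) * ((∫ s, rhoKernel f τ u v n x s t) * (h₀ x : ℂ)))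
      ((volume.restrict (Ioi 0)).prod (volume.restrict Ω)) := by
    refine ⟨hmeas.aestronglyMeasurable, ?_⟩
    rw [HasFiniteIntegral, lintegral_prod _ hmeas.enorm.aemeasurable]
    exact (lintegral_enorm_exp_mul_integral_rhoKernel_le hfm hτm hum hvm hh₀ Ω n).trans_lt
      hfin.lt_top
  calc ∫ t in Ioi (0 : ℝ), Complex.exp (-z * t) *
        ∫ x in Ω, (∫ s, rhoKernel f τ u v n x s t) * (h₀ x : ℂ)
      = ∫ x in Ω, ∫ t in Ioi (0 : ℝ),
          Complex.exp (-z * t) * ((∫ s, rhoKernel f τ u v n x s t) * (h₀ x : ℂ)) := by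
        simp_rw [← integral_const_mul]
        exact integral_integral_swap hint
    _ = ∫ x in Ω, (h₀ x : ℂ) *
          ∫ s, ∫ t in Ioi (0 : ℝ), Complex.exp (-z * t) * rhoKernel f τ u v n x s t := by
        refine integral_congr_ae (ae_of_all _ fun x => ?_)
        dsimp only
        rw [← integral_integral_swap
          (integrable_exp_mul_rhoKernel hfm hτm hτ hum hvm hu hv hz n x), ← integral_const_mul]
        refine integral_congr_ae (ae_of_all _ fun t => ?_)
        dsimp only
        rw [integral_const_mul]
        ring
    _ = _ := by
        simp_rw [integral_integral_Ioi_exp_mul_rhoKernel hτ, mul_assoc]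

theorem integral_Ioi_exp_mul_rhoFn (hfm : Measurable f) (hτm : Measurable τ) (hτ : ∀ y, 0 < τ y)
    (hum : Measurable u) (hvm : Measurable v) (hu : ∀ p, ‖u p‖ ≤ Mu) (hv : ∀ p, ‖v p‖ ≤ Mv)
    (hz : 0 < z.re) {h₀ : ℝ → ℝ} (hh₀ : Measurable h₀) {Ω : Set ℝ} (hh₀Ω : IntegrableOn h₀ Ω) :
    ∫ t in Ioi (0 : ℝ), Complex.exp (-z * t) * rhoFn Ω f τ h₀ u v t
      = ∑' n, ∫ x in Ω, (h₀ x : ℂ) * hatObs τ u (-z) x * Complex.exp (-z * birk f τ (n + 1) x)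
          * hatObs τ v z (f^[n + 1] x) := by
  have hsum := tsum_lintegral_enorm_mul_lintegral_exp_mul_rhoKernel_lt_top hfm hτm hτ hum hvm hu hv
    hz hh₀ hh₀Ω
  simp_rw [rhoFn_eq_tsum_rhoKernel, ← tsum_mul_left]
  rw [integral_tsum (fun n => ?_) ?_]
  · exact tsum_congr fun n => integral_Ioi_exp_mul_integral_rhoKernel hfm hτm hτ hum hvm hu hv hz
      hh₀ (ne_top_of_le_ne_top hsum.ne (ENNReal.le_tsum n))
  · refine ne_top_of_le_ne_top hsum.ne (ENNReal.tsum_le_tsum fun n => ?_)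
    refine le_trans (lintegral_mono fun t => ?_)
      (lintegral_enorm_exp_mul_integral_rhoKernel_le hfm hτm hum hvm hh₀ Ω n)
    rw [← integral_const_mul]
    exact enorm_integral_le_lintegral_enorm _
  · have hJ := StronglyMeasurable.integral_prod_right' (ν := volume.restrict Ω)
      (f := fun p : ℝ × ℝ => (∫ s, rhoKernel f τ u v n p.2 s p.1) * (h₀ p.2 : ℂ))
      (by fun_prop : Measurable _).stronglyMeasurable
    exact ((by fun_prop : Measurable fun t : ℝ => Complex.exp (-z * t)).stronglyMeasurable.mul
      hJ).aestronglyMeasurable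

end Kernel

section Congr

variable {Ω U : Set ℝ} {f g τ σ : ℝ → ℝ} (hΩ : MeasurableSet Ω) (hf : EqOn f g U)
  (hτ : EqOn τ σ U) (hae : ∀ᵐ x, x ∈ Ω → ∀ k, f^[k] x ∈ U)
include hΩ hf hτ hae

theorem rhoFn_congr (h₀ : ℝ → ℝ) (u v : ℝ × ℝ → ℂ) :
    rhoFn Ω f τ h₀ u v = rhoFn Ω g σ h₀ u v := by
  ext t
  refine tsum_congr fun n => setIntegral_congr_ae hΩ (hae.mono fun x hx hxΩ => ?_)
  have hτx : τ x = σ x := hτ (hx hxΩ 0)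
  simp only [hτx, birk_congr hf hτ (hx hxΩ), iterate_eq_of_eqOn hf (hx hxΩ)]

theorem tsum_integral_hatObs_congr (h₀ : ℝ → ℝ) (u v : ℝ × ℝ → ℂ) (z : ℂ) :
    ∑' n, ∫ x in Ω, (h₀ x : ℂ) * hatObs τ u (-z) x * Complex.exp (-z * birk f τ (n + 1) x)
        * hatObs τ v z (f^[n + 1] x)
      = ∑' n, ∫ x in Ω, (h₀ x : ℂ) * hatObs σ u (-z) x * Complex.exp (-z * birk g σ (n + 1) x)
        * hatObs σ v z (g^[n + 1] x) := by
  refine tsum_congr fun n => setIntegral_congr_ae hΩ (hae.mono fun x hx hxΩ => ?_)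
  rw [hatObs_congr (y := x) (hτ (hx hxΩ 0)), hatObs_congr (hτ (hx hxΩ (n + 1))),
    birk_congr hf hτ (hx hxΩ), iterate_eq_of_eqOn hf (hx hxΩ)]

end Congr

theorem laplace_transform_rho_eq_sum_general
    (a b : ℝ) (Ω : Set ℝ) (hΩ : Ω = Set.Ioo a b)
    (I : Type) [Countable I] (ω : I → Set ℝ)
    (hω_sub : ∀ i, ω i ⊆ Ω)
    (hω_int : ∀ i, ∃ c d : ℝ, c < d ∧ ω i = Set.Ioo c d)
    (hω_full : volume (Ω \ ⋃ i, ω i) = 0)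
    (f f' : ℝ → ℝ)
    (hf_deriv : ∀ i, ∀ x ∈ ω i, HasDerivAt f (f' x) x)
    (hf_cont : ∀ i, ContinuousOn f' (ω i))
    (hf_inj : ∀ i, Set.InjOn f (ω i))
    (hf_into : ∀ i, f '' ω i ⊆ Ω)
    (hf_exp : supNormE (fun x => (f' x)⁻¹) Ω < 1)
    (τ : ℝ → ℝ) (hτ_cont : ContinuousOn τ Ω) (hτ_pos : ∀ x ∈ Ω, 0 < τ x)
    (h₀ : ℝ → ℝ) (hh₀_meas : Measurable h₀)
    (hh₀_int : IntegrableOn h₀ Ω)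
    (u v : ℝ × ℝ → ℂ) (hu_meas : Measurable u) (hv_meas : Measurable v)
    (Mu : ℝ) (hu_bd : ∀ p, ‖u p‖ ≤ Mu) (Mv : ℝ) (hv_bd : ∀ p, ‖v p‖ ≤ Mv) :
    ∀ z : ℂ, 0 < z.re →
      ∫ t in Ioi (0 : ℝ), Complex.exp (-z * t) * rhoFn Ω f τ h₀ u v t
        = ∑' n : ℕ, ∫ x in Ω,
            (h₀ x : ℂ) * hatObs τ u (-z) x *
              Complex.exp (-z * birk f τ (n + 1) x) * hatObs τ v z (f^[n + 1] x) := by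
  intro z hz
  classical
  have hω_open : ∀ i, IsOpen (ω i) := fun i => by
    obtain ⟨c, d, -, h⟩ := hω_int i
    exact h ▸ isOpen_Ioo
  have hΩ_meas : MeasurableSet Ω := hΩ ▸ measurableSet_Ioo
  have hgood := ae_forall_iterate_mem_iUnion hω_open hω_sub hω_full hf_deriv hf_cont hf_inj
    hf_into (ae_abs_le_one_of_supNormE_lt_one hf_exp)
  set U := ⋃ i, ω i
  have hf_contU : ContinuousOn f U := fun x hx => by
    obtain ⟨i, hi⟩ := mem_iUnion.1 hx
    exact (hf_deriv i x hi).continuousAt.continuousWithinAt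
  have hfU : EqOn f (U.piecewise f 0) U := (piecewise_eqOn U f 0).symm
  have hτU : EqOn τ (Ω.piecewise τ 1) U :=
    (piecewise_eqOn Ω τ 1).symm.mono (iUnion_subset hω_sub)
  have hτ_pos' : ∀ y, 0 < Ω.piecewise τ 1 y := fun y => by
    by_cases hy : y ∈ Ω <;> simp [piecewise, hy, hτ_pos]
  rw [rhoFn_congr hΩ_meas hfU hτU hgood, tsum_integral_hatObs_congr hΩ_meas hfU hτU hgood]
  exact integral_Ioi_exp_mul_rhoFn
    (hf_contU.measurable_piecewise continuousOn_const (isOpen_iUnion hω_open).measurableSet)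
    (hτ_cont.measurable_piecewise continuousOn_const hΩ_meas) hτ_pos'
    hu_meas hv_meas hu_bd hv_bd hz hh₀_meas hh₀_int

/-- For a suspension semiflow `(Ω, f, τ)`, nonnegative `h₀ ∈ L¹(Ω)` and
bounded measurable `u, v`, for every `z` with `Re z > 0` the Laplace transform of `ρ`
equals `Σ_{n≥1} ∫_Ω h₀·û_{-z}·e^{-zτ_n}·(v̂_z ∘ fⁿ)`. -/
theorem laplace_transform_rho_eq_sum
    (a b : ℝ) (hab : a < b) (Ω : Set ℝ) (hΩ : Ω = Set.Ioo a b)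
    (I : Type) [Countable I] (ω : I → Set ℝ)
    (hω_sub : ∀ i, ω i ⊆ Ω)
    (hω_int : ∀ i, ∃ c d : ℝ, c < d ∧ ω i = Set.Ioo c d)
    (hω_disj : Pairwise (Function.onFun Disjoint ω))
    (hω_full : volume (Ω \ ⋃ i, ω i) = 0)
    (f f' : ℝ → ℝ)
    (hf_deriv : ∀ i, ∀ x ∈ ω i, HasDerivAt f (f' x) x)
    (hf_cont : ∀ i, ContinuousOn f' (ω i))
    (hf_inj : ∀ i, Set.InjOn f (ω i))
    (hf_into : ∀ i, f '' ω i ⊆ Ω)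
    (hf_exp : supNormE (fun x => (f' x)⁻¹) Ω < 1)
    (τ : ℝ → ℝ) (hτ_cont : ContinuousOn τ Ω) (hτ_pos : ∀ x ∈ Ω, 0 < τ x)
    (hτ_int : IntegrableOn τ Ω)
    (h₀ : ℝ → ℝ) (hh₀_meas : Measurable h₀) (hh₀_nonneg : 0 ≤ h₀)
    (hh₀_int : IntegrableOn h₀ Ω)
    (u v : ℝ × ℝ → ℂ) (hu_meas : Measurable u) (hv_meas : Measurable v)
    (Mu : ℝ) (hu_bd : ∀ p, ‖u p‖ ≤ Mu) (Mv : ℝ) (hv_bd : ∀ p, ‖v p‖ ≤ Mv) :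
    ∀ z : ℂ, 0 < z.re →
      ∫ t in Ioi (0 : ℝ), Complex.exp (-z * t) * rhoFn Ω f τ h₀ u v t
        = ∑' n : ℕ, ∫ x in Ω,
            (h₀ x : ℂ) * hatObs τ u (-z) x *
              Complex.exp (-z * birk f τ (n + 1) x) * hatObs τ v z (f^[n + 1] x) :=
  laplace_transform_rho_eq_sum_general a b Ω hΩ I ω hω_sub hω_int hω_full f f' hf_deriv hf_cont
    hf_inj hf_into hf_exp τ hτ_cont hτ_pos h₀ hh₀_meas hh₀_int u v hu_meas hv_meas Mu hu_bd Mv hv_bd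
end
end

section
/- Let λ > 0, β ∈ (0,1), α ∈ (0,1) and σ > 0 satisfy σ ≤ λ(1−β−α). Then for every z ∈ ℂ with Re z ∈ [−σ, 0], the function x ↦ x^{z/λ + 1 − β} (principal complex power) is α-Hölder on (0,1): for all x, y ∈ (0,1), |y^{z/λ+1−β} − x^{z/λ+1−β}| ≤ (|z/λ+1−β| / Re(z/λ+1−β))·|y−x|^α. -/
/-!
Write `w = z/λ + 1 - β` and `c = Re w`; the hypotheses give `α ≤ c ≤ 1`. For `0 < x ≤ y`, integrating
`t ↦ w e^{wt}` over `[log x, log y]` and bounding `|w e^{wt}| = |w| e^{ct}` gives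
`|y^w - x^w| ≤ (|w|/c)(y^c - x^c)`. Since `t ↦ t^c` is subadditive for `c ≤ 1`, `y^c - x^c ≤ (y - x)^c`, and
`(y - x)^c ≤ (y - x)^α` because `y - x ≤ 1`.
-/

open Set

lemma integral_rexp_mul {c : ℝ} (hc : c ≠ 0) (a b : ℝ) :
    ∫ t in a..b, Real.exp (c * t) = (Real.exp (c * b) - Real.exp (c * a)) / c := by
  rw [intervalIntegral.integral_comp_mul_left (fun t => Real.exp t) hc, integral_exp,
    smul_eq_mul, inv_mul_eq_div]

lemma norm_cexp_mul_sub_cexp_mul_le {w : ℂ} (hw : 0 < w.re) {u v : ℝ} (huv : u ≤ v) :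
    ‖Complex.exp (w * v) - Complex.exp (w * u)‖
      ≤ ‖w‖ / w.re * (Real.exp (w.re * v) - Real.exp (w.re * u)) := by
  have hw0 : w ≠ 0 := fun h => by simp [h] at hw
  have hftc : Complex.exp (w * v) - Complex.exp (w * u) = ∫ t in u..v, w * Complex.exp (w * t) := by
    rw [intervalIntegral.integral_const_mul, integral_exp_mul_complex hw0, mul_div_cancel₀ _ hw0]
  have hnorm (t : ℝ) : ‖w * Complex.exp (w * t)‖ = ‖w‖ * Real.exp (w.re * t) := by
    rw [norm_mul, Complex.norm_exp, Complex.re_mul_ofReal]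
  calc ‖Complex.exp (w * v) - Complex.exp (w * u)‖
      ≤ ∫ t in u..v, ‖w * Complex.exp (w * t)‖ := by
        rw [hftc]; exact intervalIntegral.norm_integral_le_integral_norm huv
    _ = ‖w‖ * ((Real.exp (w.re * v) - Real.exp (w.re * u)) / w.re) := by
        simp_rw [hnorm, intervalIntegral.integral_const_mul, integral_rexp_mul hw.ne']
    _ = ‖w‖ / w.re * (Real.exp (w.re * v) - Real.exp (w.re * u)) := by ring

lemma Real.rpow_sub_rpow_le_sub_rpow {c x y : ℝ} (hc0 : 0 ≤ c) (hc1 : c ≤ 1) (hx : 0 ≤ x)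
    (hxy : x ≤ y) : y ^ c - x ^ c ≤ (y - x) ^ c := by
  have h := Real.rpow_add_le_add_rpow (sub_nonneg.2 hxy) hx hc0 hc1
  rw [sub_add_cancel] at h
  linarith

lemma norm_cexp_mul_log_sub_le_of_le {w : ℂ} {α : ℝ} (hα : 0 < α) (hαw : α ≤ w.re)
    (hw1 : w.re ≤ 1) {x y : ℝ} (hx : 0 < x) (hxy : x ≤ y) (hyx : y - x ≤ 1) :
    ‖Complex.exp (w * Real.log y) - Complex.exp (w * Real.log x)‖
      ≤ ‖w‖ / w.re * (y - x) ^ α := by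
  have hc : 0 < w.re := hα.trans_le hαw
  have hexp {t : ℝ} (ht : 0 < t) : Real.exp (w.re * Real.log t) = t ^ w.re := by
    rw [Real.rpow_def_of_pos ht, mul_comm]
  refine (norm_cexp_mul_sub_cexp_mul_le hc (Real.log_le_log hx hxy)).trans ?_
  rw [hexp hx, hexp (hx.trans_le hxy)]
  gcongr
  calc y ^ w.re - x ^ w.re ≤ (y - x) ^ w.re :=
        Real.rpow_sub_rpow_le_sub_rpow hc.le hw1 hx.le hxy
    _ ≤ (y - x) ^ α := Real.rpow_le_rpow_of_exponent_ge' (sub_nonneg.2 hxy) hyx hα.le hαw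

lemma norm_cexp_mul_log_sub_le {w : ℂ} {α : ℝ} (hα : 0 < α) (hαw : α ≤ w.re)
    (hw1 : w.re ≤ 1) {x y : ℝ} (hx : 0 < x) (hy : 0 < y) (hxy : |y - x| ≤ 1) :
    ‖Complex.exp (w * Real.log y) - Complex.exp (w * Real.log x)‖
      ≤ ‖w‖ / w.re * |y - x| ^ α := by
  rcases le_total x y with h | h
  · rw [abs_of_nonneg (sub_nonneg.2 h)] at hxy ⊢
    exact norm_cexp_mul_log_sub_le_of_le hα hαw hw1 hx h hxy
  · rw [abs_sub_comm, abs_of_nonneg (sub_nonneg.2 h)] at hxy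
    rw [norm_sub_rev, abs_sub_comm, abs_of_nonneg (sub_nonneg.2 h)]
    exact norm_cexp_mul_log_sub_le_of_le hα hαw hw1 hy h hxy

theorem cpow_holder_on_unit_interval_general
    (lam β α σ : ℝ) (hlam : 0 < lam) (hβ : β ∈ Ioo (0 : ℝ) 1)
    (hα : α ∈ Ioo (0 : ℝ) 1) (hσle : σ ≤ lam * (1 - β - α)) :
    ∀ z : ℂ, z.re ∈ Icc (-σ) 0 →
      ∀ x ∈ Ioo (0 : ℝ) 1, ∀ y ∈ Ioo (0 : ℝ) 1,
        ‖Complex.exp ((z / (lam : ℂ) + 1 - (β : ℂ)) * (Real.log y : ℂ))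
            - Complex.exp ((z / (lam : ℂ) + 1 - (β : ℂ)) * (Real.log x : ℂ))‖
          ≤ (‖z / (lam : ℂ) + 1 - (β : ℂ)‖ / (z / (lam : ℂ) + 1 - (β : ℂ)).re)
              * |y - x| ^ α := by
  intro z hz x hx y hy
  have hre : (z / (lam : ℂ) + 1 - (β : ℂ)).re = z.re / lam + 1 - β := by
    simp [Complex.div_ofReal_re]
  have hαre : α ≤ z.re / lam + 1 - β := by
    have : -σ / lam ≤ z.re / lam := div_le_div_of_nonneg_right hz.1 hlam.le
    have : σ / lam ≤ 1 - β - α := (div_le_iff₀ hlam).2 (by linarith)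
    linarith [neg_div lam σ]
  have hre1 : z.re / lam + 1 - β ≤ 1 := by
    linarith [div_nonpos_of_nonpos_of_nonneg hz.2 hlam.le, hβ.1]
  have hyx : |y - x| ≤ 1 := abs_sub_le_of_nonneg_of_le hy.1.le hy.2.le hx.1.le hx.2.le
  rw [← hre] at hαre hre1
  exact norm_cexp_mul_log_sub_le hα.1 hαre hre1 hx.1 hy.1 hyx

/-- Let `λ > 0`, `β, α ∈ (0,1)`, `σ > 0` with `σ ≤ λ(1-β-α)`. Then for
every `z ∈ ℂ` with `Re z ∈ [-σ, 0]` the function `x ↦ x^{z/λ+1-β}` (principal complex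
power) is `α`-Hölder on `(0,1)`: for all `x, y ∈ (0,1)`,
`|y^{z/λ+1-β} - x^{z/λ+1-β}| ≤ (|z/λ+1-β| / Re(z/λ+1-β))·|y-x|^α`. -/
theorem cpow_holder_on_unit_interval
    (lam β α σ : ℝ) (hlam : 0 < lam) (hβ : β ∈ Ioo (0 : ℝ) 1)
    (hα : α ∈ Ioo (0 : ℝ) 1) (hσ : 0 < σ) (hσle : σ ≤ lam * (1 - β - α)) :
    ∀ z : ℂ, z.re ∈ Icc (-σ) 0 →
      ∀ x ∈ Ioo (0 : ℝ) 1, ∀ y ∈ Ioo (0 : ℝ) 1,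
        ‖Complex.exp ((z / (lam : ℂ) + 1 - (β : ℂ)) * (Real.log y : ℂ))
            - Complex.exp ((z / (lam : ℂ) + 1 - (β : ℂ)) * (Real.log x : ℂ))‖
          ≤ (‖z / (lam : ℂ) + 1 - (β : ℂ)‖ / (z / (lam : ℂ) + 1 - (β : ℂ)).re)
              * |y - x| ^ α :=
  cpow_holder_on_unit_interval_general lam β α σ hlam hβ hα hσle
end
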